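/- (Contraction of the strongly dissipative delayed subsystem, Remark 3.8, discrete case) Consider the discrete delayed z₂-subsystem with input and assume the strong dissipativity condition ℓ₂₂·‖w₂₂‖ < 1. Then for every continuous input v : [0,∞) → (Ω → ℝ^{n₂}) and every pair of solutions z₂ᵃ, z₂ᵇ of τ₂(r)·dz₂/dt(t,r) = −z₂(t,r) + Σ_{r'∈Ω} w₂₂(r,r')S₂₂(z₂(t−d₂₂(r,r'),r')) + v(t,r) (with arbitrary continuous initial histories on [−d̄,0]), the distance converges to zero: ‖z₂ᵃ(t) − z₂ᵇ(t)‖ → 0 as t → ∞. -/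

import Mathlib

/-!
The difference `D = z₂ᵃ - z₂ᵇ` (in which the input `v` cancels) solves, componentwise,
`τ₂ r • D_r' = -D_r + G_r`, where the forcing `G_r(t)` is bounded because `S₂₂` is, and
`‖G_r(t)‖ ≤ ℓ ∑_{r'} ‖w₂₂ r r'‖ ‖D_{r'}(t - d₂₂ r r')‖` because `S₂₂` is Lipschitz.
Comparison with the scalar relaxation equation shows that each `‖D_r‖` is bounded and that
its `limsup` is at most that of `‖G_r‖`. The vector `L` of these `limsup`s therefore satisfies
`L_r ≤ ℓ ∑_{r'} ‖w₂₂ r r'‖ L_{r'}`, and Cauchy–Schwarz turns this into `|L| ≤ ℓ ‖w₂₂‖ |L|`,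
so the small-gain condition `ℓ ‖w₂₂‖ < 1` forces `L = 0`.
-/

open Set Filter Topology

/-- Action of a matrix on a Euclidean vector. -/
noncomputable def mApply {n m : ℕ} (M : Matrix (Fin n) (Fin m) ℝ)
    (v : EuclideanSpace ℝ (Fin m)) : EuclideanSpace ℝ (Fin n) :=
  WithLp.toLp 2 (fun i => ∑ j, M i j * v j)

/-- Operator norm of a matrix, induced by the Euclidean norms. -/
noncomputable def matOpNorm {n m : ℕ} (M : Matrix (Fin n) (Fin m) ℝ) : ℝ :=
  ‖LinearMap.toContinuousLinearMap (Matrix.toEuclideanLin M)‖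

/-- Norm of a state `x : Ω → ℝⁿ`: `‖x‖² = ∑_r |x r|²`. -/
noncomputable def vnorm {Ω : Type*} [Fintype Ω] {n : ℕ}
    (x : Ω → EuclideanSpace ℝ (Fin n)) : ℝ :=
  Real.sqrt (∑ r, ‖x r‖ ^ 2)

/-- Operator-norm based norm of a kernel: `‖k‖² = ∑_{r,r'} ‖k(r,r')‖²_op`. -/
noncomputable def knormOp {Ω : Type*} [Fintype Ω] {n m : ℕ}
    (k : Ω → Ω → Matrix (Fin n) (Fin m) ℝ) : ℝ :=
  Real.sqrt (∑ r, ∑ r', matOpNorm (k r r') ^ 2)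

section Relaxation

variable {E : Type*} [NormedAddCommGroup E] [NormedSpace ℝ E] {f g : ℝ → E} {τ a c : ℝ}

/-- `e^{t/τ} • f t` has derivative `τ⁻¹ e^{t/τ} • g t`, which is compared with the scalar
function of derivative `τ⁻¹ e^{t/τ} c`. -/
theorem norm_le_of_relaxation (hτ : 0 < τ) {b : ℝ} (hab : a ≤ b) (hf : ContinuousOn f (Icc a b))
    (hd : ∀ t ∈ Ico a b, HasDerivWithinAt f (τ⁻¹ • (-f t + g t)) (Ici t) t)
    (hg : ∀ t ∈ Ico a b, ‖g t‖ ≤ c) :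
    ‖f b‖ ≤ Real.exp ((a - b) / τ) * ‖f a‖ + (1 - Real.exp ((a - b) / τ)) * c := by
  set e : ℝ → ℝ := fun t => Real.exp (t / τ)
  have he : ∀ t, HasDerivAt e (e t * τ⁻¹) t := fun t => by
    simpa [e, div_eq_mul_inv] using ((hasDerivAt_id t).mul_const τ⁻¹).exp
  have hy : ∀ t ∈ Ico a b, HasDerivWithinAt (fun s => e s • f s) ((e t * τ⁻¹) • g t) (Ici t) t := by
    intro t ht
    refine ((he t).hasDerivWithinAt.smul (hd t ht)).congr_deriv ?_
    simp only [smul_add, smul_neg, smul_smul]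
    abel
  have hB : ∀ t, HasDerivAt (fun s => e a * ‖f a‖ + (e s - e a) * c) (e t * τ⁻¹ * c) t :=
    fun t => by simpa using (((he t).sub_const (e a)).mul_const c).const_add (e a * ‖f a‖)
  have hcomp := image_norm_le_of_norm_deriv_right_le_deriv_boundary
    (f := fun s => e s • f s)
    ((Real.continuous_exp.comp (continuous_id.div_const τ)).continuousOn.smul hf) hy
    (by simp [norm_smul, e, abs_of_pos (Real.exp_pos _)]) hB
    (fun t ht => by
      rw [norm_smul, Real.norm_of_nonneg (by positivity)]
      exact mul_le_mul_of_nonneg_left (hg t ht) (by positivity)) ⟨hab, le_rfl⟩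
  rw [norm_smul, Real.norm_of_nonneg (Real.exp_pos _).le] at hcomp
  have hexp : e b * Real.exp ((a - b) / τ) = e a := by
    simp only [e, ← Real.exp_add]; ring_nf
  refine le_of_mul_le_mul_left ?_ (Real.exp_pos (b / τ))
  linear_combination hcomp + (c - ‖f a‖) * hexp

theorem norm_le_of_relaxation_Ici (hτ : 0 < τ)
    (hd : ∀ t ≥ a, HasDerivWithinAt f (τ⁻¹ • (-f t + g t)) (Ici a) t)
    (hg : ∀ t ≥ a, ‖g t‖ ≤ c) {b : ℝ} (hab : a ≤ b) :
    ‖f b‖ ≤ Real.exp ((a - b) / τ) * ‖f a‖ + (1 - Real.exp ((a - b) / τ)) * c :=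
  norm_le_of_relaxation hτ hab (fun t ht => (hd t ht.1).continuousWithinAt.mono Icc_subset_Ici_self)
    (fun t ht => (hd t ht.1).mono (Ici_subset_Ici.2 ht.1)) (fun t ht => hg t ht.1)

theorem norm_le_max_of_relaxation (hτ : 0 < τ)
    (hd : ∀ t ≥ a, HasDerivWithinAt f (τ⁻¹ • (-f t + g t)) (Ici a) t)
    (hg : ∀ t ≥ a, ‖g t‖ ≤ c) {b : ℝ} (hab : a ≤ b) : ‖f b‖ ≤ max ‖f a‖ c := by
  have hθ : 0 ≤ 1 - Real.exp ((a - b) / τ) :=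
    sub_nonneg.2 (Real.exp_le_one_iff.2 (div_nonpos_of_nonpos_of_nonneg (by linarith) hτ.le))
  calc ‖f b‖ ≤ Real.exp ((a - b) / τ) * ‖f a‖ + (1 - Real.exp ((a - b) / τ)) * c :=
        norm_le_of_relaxation_Ici hτ hd hg hab
    _ ≤ Real.exp ((a - b) / τ) * max ‖f a‖ c + (1 - Real.exp ((a - b) / τ)) * max ‖f a‖ c := by
        gcongr
        exacts [le_max_left _ _, le_max_right _ _]
    _ = max ‖f a‖ c := by ring

theorem limsup_norm_le_of_relaxation (hτ : 0 < τ)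
    (hd : ∀ t ≥ a, HasDerivWithinAt f (τ⁻¹ • (-f t + g t)) (Ici a) t)
    (hg : ∀ᶠ t in atTop, ‖g t‖ ≤ c) : limsup (fun t => ‖f t‖) atTop ≤ c := by
  obtain ⟨T, hT⟩ := eventually_atTop.1 (hg.and (eventually_ge_atTop a))
  have hdT : ∀ t ≥ T, HasDerivWithinAt f (τ⁻¹ • (-f t + g t)) (Ici T) t := fun t ht =>
    (hd t ((hT T le_rfl).2.trans ht)).mono (Ici_subset_Ici.2 (hT T le_rfl).2)
  have hdecay : Tendsto (fun t => Real.exp ((T - t) / τ)) atTop (𝓝 0) :=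
    Real.tendsto_exp_atBot.comp
      ((tendsto_atBot_add_const_left _ T tendsto_neg_atTop_atBot).atBot_div_const hτ)
  have hbound : Tendsto (fun t => Real.exp ((T - t) / τ) * ‖f T‖ + (1 - Real.exp ((T - t) / τ)) * c)
      atTop (𝓝 c) := by
    simpa using
      (hdecay.mul_const ‖f T‖).add (((tendsto_const_nhds (x := 1)).sub hdecay).mul_const c)
  refine (limsup_le_limsup ?_ (isCoboundedUnder_le_of_le atTop fun t => norm_nonneg _)
    hbound.isBoundedUnder_le).trans_eq hbound.limsup_eq
  filter_upwards [eventually_ge_atTop T] with t ht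
  exact norm_le_of_relaxation_Ici hτ hdT (fun s hs => (hT s hs).1) ht

end Relaxation

section SmallGain

variable {Ω : Type*} [Fintype Ω]

theorem eq_zero_of_le_mul_sum_of_small_gain {L : Ω → ℝ} {A : Ω → Ω → ℝ} {l : ℝ} (hL : ∀ r, 0 ≤ L r)
    (hl : 0 ≤ l) (hLA : ∀ r, L r ≤ l * ∑ r', A r r' * L r')
    (hsmall : l * √(∑ r, ∑ r', A r r' ^ 2) < 1) : L = 0 := by
  set κ := √(∑ r, ∑ r', A r r' ^ 2)
  obtain ⟨N, hNdef⟩ : ∃ N, N = ∑ r, L r ^ 2 := ⟨_, rfl⟩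
  have hN : N ≤ (l * κ) ^ 2 * N := by
    calc N ≤ ∑ r, l ^ 2 * (∑ r', A r r' * L r') ^ 2 := by
          rw [hNdef]
          gcongr with r
          rw [← mul_pow]
          exact pow_le_pow_left₀ (hL r) (hLA r) 2
      _ ≤ ∑ r, l ^ 2 * ((∑ r', A r r' ^ 2) * N) := by
          gcongr with r
          exact hNdef ▸ Finset.sum_mul_sq_le_sq_mul_sq _ _ _
      _ = (l * κ) ^ 2 * N := by
          rw [mul_pow, Real.sq_sqrt (by positivity), ← Finset.mul_sum, ← Finset.sum_mul]
          ring
  have hq : (l * κ) ^ 2 < 1 := by nlinarith [mul_nonneg hl (Real.sqrt_nonneg _ : 0 ≤ κ)]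
  have hN_nonneg : 0 ≤ N := hNdef ▸ Finset.sum_nonneg fun r _ => sq_nonneg (L r)
  have hN0 : N = 0 := by nlinarith
  funext r
  simpa using (Finset.sum_eq_zero_iff_of_nonneg fun r _ => sq_nonneg (L r)).1 (hNdef ▸ hN0) r
    (Finset.mem_univ r)

variable {E : Type*} [NormedAddCommGroup E] [NormedSpace ℝ E] {u g : Ω → ℝ → E} {τ : Ω → ℝ}
  {A d : Ω → Ω → ℝ} {a l : ℝ}

theorem limsup_norm_le_mul_sum_limsup (hτ : ∀ r, 0 < τ r)
    (hu : ∀ r, ∀ t ≥ a, HasDerivWithinAt (u r) ((τ r)⁻¹ • (-u r t + g r t)) (Ici a) t)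
    (hbdd : ∀ r, IsBoundedUnder (· ≤ ·) atTop fun t => ‖u r t‖)
    (hA : ∀ r r', 0 ≤ A r r') (hl : 0 ≤ l)
    (hg : ∀ r t, ‖g r t‖ ≤ l * ∑ r', A r r' * ‖u r' (t - d r r')‖) (r : Ω) :
    limsup (fun t => ‖u r t‖) atTop ≤ l * ∑ r', A r r' * limsup (fun t => ‖u r' t‖) atTop := by
  set L := fun r' => limsup (fun t => ‖u r' t‖) atTop
  have hδ : ∀ δ > 0, L r ≤ l * ∑ r', A r r' * (L r' + δ) := by
    intro δ hδ
    refine limsup_norm_le_of_relaxation (hτ r) (hu r) ?_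
    have hev : ∀ r', ∀ᶠ t in atTop, ‖u r' (t - d r r')‖ ≤ L r' + δ := fun r' =>
      (tendsto_atTop_add_const_right atTop (-d r r') tendsto_id).eventually
        ((eventually_lt_of_limsup_lt (lt_add_of_pos_right _ hδ) (hbdd r')).mono fun _ h => h.le)
    filter_upwards [eventually_all.2 hev] with t ht
    exact (hg r t).trans (by gcongr with r'; exacts [hA r r', ht r'])
  have hcont : Tendsto (fun δ => l * ∑ r', A r r' * (L r' + δ)) (𝓝[>] 0)
      (𝓝 (l * ∑ r', A r r' * L r')) :=
    ((by fun_prop : Continuous fun δ => l * ∑ r', A r r' * (L r' + δ)).tendsto' 0 _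
      (by simp)).mono_left nhdsWithin_le_nhds
  exact ge_of_tendsto hcont (eventually_nhdsWithin_of_forall hδ)

theorem tendsto_norm_zero_of_small_gain (hτ : ∀ r, 0 < τ r)
    (hu : ∀ r, ∀ t ≥ a, HasDerivWithinAt (u r) ((τ r)⁻¹ • (-u r t + g r t)) (Ici a) t)
    (hC : ∀ r, ∃ C, ∀ t, ‖g r t‖ ≤ C) (hA : ∀ r r', 0 ≤ A r r') (hl : 0 ≤ l)
    (hg : ∀ r t, ‖g r t‖ ≤ l * ∑ r', A r r' * ‖u r' (t - d r r')‖)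
    (hsmall : l * √(∑ r, ∑ r', A r r' ^ 2) < 1) (r : Ω) :
    Tendsto (fun t => ‖u r t‖) atTop (𝓝 0) := by
  have hbdd : ∀ r, IsBoundedUnder (· ≤ ·) atTop fun t => ‖u r t‖ := fun r =>
    let ⟨C, hC⟩ := hC r
    isBoundedUnder_of_eventually_le <| (eventually_ge_atTop a).mono fun _ ht =>
      norm_le_max_of_relaxation (hτ r) (hu r) (fun s _ => hC s) ht
  have hL : (fun r => limsup (fun t => ‖u r t‖) atTop) = 0 :=
    eq_zero_of_le_mul_sum_of_small_gain
      (fun r => le_limsup_of_frequently_le (.of_forall fun _ => norm_nonneg _) (hbdd r)) hl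
      (limsup_norm_le_mul_sum_limsup hτ hu hbdd hA hl hg) hsmall
  exact tendsto_of_le_liminf_of_limsup_le
    (le_liminf_of_le (hbdd r).isCoboundedUnder_flip (.of_forall fun _ => norm_nonneg _))
    (congrFun hL r).le (hbdd r)
    (isBoundedUnder_of_eventually_ge (.of_forall fun _ => norm_nonneg _))

end SmallGain

section Network

variable {Ω : Type*} [Fintype Ω] {n m : ℕ}

theorem mApply_eq_toEuclideanLin (M : Matrix (Fin n) (Fin m) ℝ) (v : EuclideanSpace ℝ (Fin m)) :
    mApply M v = Matrix.toEuclideanLin M v := by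
  ext i
  simp [mApply, Matrix.toLpLin_apply, Matrix.mulVec, dotProduct]

theorem norm_mApply_le (M : Matrix (Fin n) (Fin m) ℝ) (v : EuclideanSpace ℝ (Fin m)) :
    ‖mApply M v‖ ≤ matOpNorm M * ‖v‖ :=
  mApply_eq_toEuclideanLin M v ▸
    (LinearMap.toContinuousLinearMap (Matrix.toEuclideanLin M)).le_opNorm v

theorem mApply_sub (M : Matrix (Fin n) (Fin m) ℝ) (u v : EuclideanSpace ℝ (Fin m)) :
    mApply M (u - v) = mApply M u - mApply M v := by
  simp only [mApply_eq_toEuclideanLin, map_sub]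

theorem norm_sum_mApply_sub_sum_le (w : Ω → Matrix (Fin n) (Fin m) ℝ)
    {x y : Ω → EuclideanSpace ℝ (Fin m)} {φ : Ω → ℝ} (h : ∀ r, ‖x r - y r‖ ≤ φ r) :
    ‖∑ r, mApply (w r) (x r) - ∑ r, mApply (w r) (y r)‖ ≤ ∑ r, matOpNorm (w r) * φ r := by
  rw [← Finset.sum_sub_distrib]
  refine (norm_sum_le _ _).trans (Finset.sum_le_sum fun r _ => ?_)
  rw [← mApply_sub]
  exact (norm_mApply_le _ _).trans (mul_le_mul_of_nonneg_left (h r) (norm_nonneg _))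

theorem tendsto_vnorm_zero {α : Type*} {F : Filter α} {x : α → Ω → EuclideanSpace ℝ (Fin n)}
    (h : ∀ r, Tendsto (fun t => ‖x t r‖) F (𝓝 0)) : Tendsto (fun t => vnorm (x t)) F (𝓝 0) := by
  simpa [vnorm] using (tendsto_finsetSum Finset.univ fun r _ => (h r).pow 2).sqrt

end Network

theorem contraction_of_dissipative_subsystem_general
    {Ω : Type*} [Fintype Ω]
    {n₂ : ℕ}
    (τ₂ : Ω → ℝ) (hτ₂ : ∀ r, 0 < τ₂ r)
    (S₂₂ : EuclideanSpace ℝ (Fin n₂) → EuclideanSpace ℝ (Fin n₂))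
    (Sb₂₂ : ℝ) (hSb₂₂ : ∀ x, ‖S₂₂ x‖ ≤ Sb₂₂)
    (l₂₂ : ℝ) (hl₂₂ : ∀ x y, ‖S₂₂ x - S₂₂ y‖ ≤ l₂₂ * ‖x - y‖)
    (w₂₂ : Ω → Ω → Matrix (Fin n₂) (Fin n₂) ℝ)
    (d₂₂ : Ω → Ω → ℝ)
    -- strong dissipativity
    (hdiss : l₂₂ * knormOp w₂₂ < 1)
    -- a continuous input
    (v : ℝ → Ω → EuclideanSpace ℝ (Fin n₂))
    -- two solutions driven by v
    (za zb : ℝ → Ω → EuclideanSpace ℝ (Fin n₂))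
    (hza : ∀ t ≥ (0:ℝ), ∀ r, HasDerivWithinAt (fun s => za s r)
      ((τ₂ r)⁻¹ • (-(za t r)
        + (∑ r', mApply (w₂₂ r r') (S₂₂ (za (t - d₂₂ r r') r')))
        + v t r)) (Ici 0) t)
    (hzb : ∀ t ≥ (0:ℝ), ∀ r, HasDerivWithinAt (fun s => zb s r)
      ((τ₂ r)⁻¹ • (-(zb t r)
        + (∑ r', mApply (w₂₂ r r') (S₂₂ (zb (t - d₂₂ r r') r')))
        + v t r)) (Ici 0) t) :
    Tendsto (fun t => vnorm (fun r => za t r - zb t r)) atTop (nhds 0) := by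
  have hlip : ∀ x y, ‖S₂₂ x - S₂₂ y‖ ≤ max l₂₂ 0 * ‖x - y‖ := fun x y =>
    (hl₂₂ x y).trans (by gcongr; exact le_max_left _ _)
  have hsmall : max l₂₂ 0 * knormOp w₂₂ < 1 := by
    rcases le_total 0 l₂₂ with h | h
    · rwa [max_eq_left h]
    · simp [max_eq_right h]
  refine tendsto_vnorm_zero fun r => tendsto_norm_zero_of_small_gain (a := 0) (d := d₂₂)
    (u := fun r t => za t r - zb t r)
    (g := fun r t => ∑ r', mApply (w₂₂ r r') (S₂₂ (za (t - d₂₂ r r') r'))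
      - ∑ r', mApply (w₂₂ r r') (S₂₂ (zb (t - d₂₂ r r') r')))
    (A := fun r r' => matOpNorm (w₂₂ r r')) hτ₂ (fun r t ht => ?_)
    (fun r => ⟨∑ r', matOpNorm (w₂₂ r r') * (Sb₂₂ + Sb₂₂), fun t => ?_⟩)
    (fun _ _ => norm_nonneg _) (le_max_right _ _) (fun r t => ?_) hsmall r
  · refine ((hza t ht r).sub (hzb t ht r)).congr_deriv ?_
    rw [← smul_sub]
    congr 1
    abel
  · exact norm_sum_mApply_sub_sum_le _ fun _ => norm_sub_le_of_le (hSb₂₂ _) (hSb₂₂ _)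
  · refine (norm_sum_mApply_sub_sum_le _ fun _ => hlip _ _).trans_eq ?_
    rw [Finset.mul_sum]
    exact Finset.sum_congr rfl fun _ _ => by ring

/-- **Contraction of the strongly dissipative delayed subsystem**
(Remark 3.8, discrete case). Under `ℓ₂₂·‖w₂₂‖ < 1`, any two solutions of the delayed
`z₂`-subsystem driven by the same continuous input `v` approach each other:
`‖z₂ᵃ(t) − z₂ᵇ(t)‖ → 0` as `t → ∞`. -/
theorem contraction_of_dissipative_subsystem
    {Ω : Type*} [Fintype Ω] [Nonempty Ω]
    {n₂ : ℕ} (hn₂ : 0 < n₂)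
    (dbar : ℝ) (hdbar : 0 < dbar)
    (τ₂ : Ω → ℝ) (hτ₂ : ∀ r, 0 < τ₂ r)
    (S₂₂ : EuclideanSpace ℝ (Fin n₂) → EuclideanSpace ℝ (Fin n₂))
    (Sb₂₂ : ℝ) (hSb₂₂ : ∀ x, ‖S₂₂ x‖ ≤ Sb₂₂)
    (l₂₂ : ℝ) (hl₂₂ : ∀ x y, ‖S₂₂ x - S₂₂ y‖ ≤ l₂₂ * ‖x - y‖)
    (w₂₂ : Ω → Ω → Matrix (Fin n₂) (Fin n₂) ℝ)
    (d₂₂ : Ω → Ω → ℝ) (hd₂₂ : ∀ r r', d₂₂ r r' ∈ Icc 0 dbar)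
    -- strong dissipativity
    (hdiss : l₂₂ * knormOp w₂₂ < 1)
    -- a continuous input
    (v : ℝ → Ω → EuclideanSpace ℝ (Fin n₂)) (hv : ContinuousOn v (Ici 0))
    -- two solutions driven by v
    (za zb : ℝ → Ω → EuclideanSpace ℝ (Fin n₂))
    (hzac : ContinuousOn za (Ici (-dbar))) (hzbc : ContinuousOn zb (Ici (-dbar)))
    (hza : ∀ t ≥ (0:ℝ), ∀ r, HasDerivWithinAt (fun s => za s r)
      ((τ₂ r)⁻¹ • (-(za t r)
        + (∑ r', mApply (w₂₂ r r') (S₂₂ (za (t - d₂₂ r r') r')))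
        + v t r)) (Ici 0) t)
    (hzb : ∀ t ≥ (0:ℝ), ∀ r, HasDerivWithinAt (fun s => zb s r)
      ((τ₂ r)⁻¹ • (-(zb t r)
        + (∑ r', mApply (w₂₂ r r') (S₂₂ (zb (t - d₂₂ r r') r')))
        + v t r)) (Ici 0) t) :
    Tendsto (fun t => vnorm (fun r => za t r - zb t r)) atTop (nhds 0) :=
  contraction_of_dissipative_subsystem_general τ₂ hτ₂ S₂₂ Sb₂₂ hSb₂₂ l₂₂ hl₂₂ w₂₂ d₂₂ hdiss v za zb
    hza hzb
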